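/- Let B, Q be real n×n matrices with Q symmetric positive semidefinite, with B nilpotent, satisfying the Kalman rank condition. Then for every s > 0 there exists a constant c > 0 such that for all t > 0, M_t^s ≤ c·t^{1/2 - 1/(2s)}, where M_t^s = sup_{ξ ∈ S^{n-1}} [∫₀ᵗ |Q^{1/2} e^{τBᵀ} ξ|² dτ]^{1/2} · [∫₀ᵗ |Q^{1/2} e^{τBᵀ} ξ|^{2s} dτ]^{-1/(2s)}. -/

import Mathlib

open Matrix

/-- The square root of a positive semidefinite matrix, as `Matrix.PosSemidef.sqrt` was defined
in older Mathlib (removed since). -/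
noncomputable def Matrix.PosSemidef.sqrt {n : Type*} [Fintype n] [DecidableEq n]
    {A : Matrix n n ℝ} (hA : A.PosSemidef) : Matrix n n ℝ :=
  hA.1.eigenvectorUnitary.1 * diagonal ((↑) ∘ Real.sqrt ∘ hA.1.eigenvalues) *
    (star hA.1.eigenvectorUnitary : Matrix n n ℝ)

/-- The Euclidean norm of a vector of `ℝⁿ`. -/
noncomputable def euclNorm {n : ℕ} (v : Fin n → ℝ) : ℝ := Real.sqrt (∑ i, v i ^ 2)

/-- The quantity
`M_t^s = sup_{ξ ∈ S^{n-1}} (∫₀ᵗ |Q^{1/2}e^{τBᵀ}ξ|² dτ)^{1/2} (∫₀ᵗ |Q^{1/2}e^{τBᵀ}ξ|^{2s} dτ)^{-1/(2s)}`. -/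
noncomputable def Mts {n : ℕ} (B Q : Matrix (Fin n) (Fin n) ℝ) (hQ : Q.PosSemidef)
    (s t : ℝ) : ℝ :=
  ⨆ ξ : {v : Fin n → ℝ // euclNorm v = 1},
    (∫ τ in (0:ℝ)..t,
        euclNorm (hQ.sqrt *ᵥ (NormedSpace.exp (τ • Bᵀ) *ᵥ (ξ : Fin n → ℝ))) ^ (2:ℝ)) ^ ((1:ℝ)/2) *
    (∫ τ in (0:ℝ)..t,
        euclNorm (hQ.sqrt *ᵥ (NormedSpace.exp (τ • Bᵀ) *ᵥ (ξ : Fin n → ℝ))) ^ (2*s)) ^ (-(1/(2*s)))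

/-- The Kalman rank condition (kernel form). -/
def KalmanKer {n : ℕ} (B Q : Matrix (Fin n) (Fin n) ℝ) (hQ : Q.PosSemidef) : Prop :=
  ∃ r : ℕ, r ≤ n - 1 ∧
    (⨅ k ∈ Finset.range (r + 1),
      LinearMap.ker (Matrix.mulVecLin (hQ.sqrt * Bᵀ ^ k))) = ⊥

/-! For nilpotent `B` with `B ^ k = 0`, the trajectory `τ ↦ Q^{1/2} e^{τBᵀ} ξ` is a vector
polynomial of degree `< k`, and rescaling `τ = tα` turns the two integrals over `[0, t]` into
`t` times integrals over `[0, 1]` of a polynomial whose coefficients depend on `t` and `ξ`. On the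
finite-dimensional space of such coefficient vectors, the `L²` and `L^{2s}` (quasi-)norms on
`[0, 1]` are continuous, positively homogeneous and positive off `0` (a polynomial vanishing on
`[0, 1]` is zero), so compactness of the unit sphere makes them comparable with a constant
independent of `t` and `ξ`; the power `t^{1/2 - 1/(2s)}` is what the rescaling leaves over. -/

open Set

section PolyPath

variable {F : Type*} [NormedAddCommGroup F] [NormedSpace ℝ F] {k : ℕ}

noncomputable def polyPath (c : Fin k → F) (α : ℝ) : F := ∑ j : Fin k, α ^ (j : ℕ) • c j

lemma continuous_polyPath_uncurry :
    Continuous fun p : (Fin k → F) × ℝ => polyPath p.1 p.2 := by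
  unfold polyPath
  fun_prop

lemma polyPath_smul (r : ℝ) (c : Fin k → F) (α : ℝ) :
    polyPath (r • c) α = r • polyPath c α := by
  simp only [polyPath, Finset.smul_sum, Pi.smul_apply, smul_comm r]

lemma polyPath_mul (c : Fin k → F) (t α : ℝ) :
    polyPath c (t * α) = polyPath (fun j => t ^ (j : ℕ) • c j) α := by
  simp only [polyPath, mul_pow, mul_smul, smul_comm (t ^ _)]

open Polynomial in
lemma eq_zero_of_polyPath_eq_zero {c : Fin k → F} {S : Set ℝ} (hS : S.Infinite)
    (h : ∀ α ∈ S, polyPath c α = 0) : c = 0 := by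
  funext j
  refine SeparatingDual.eq_zero_of_forall_dual_eq_zero (R := ℝ) fun φ => ?_
  let q : ℝ[X] := ∑ i : Fin k, C (φ (c i)) * X ^ (i : ℕ)
  have hq : q = 0 := by
    refine eq_zero_of_infinite_isRoot q (hS.mono fun α hα => ?_)
    have := congrArg φ (h α hα)
    simp only [polyPath, map_sum, map_smul, smul_eq_mul, map_zero] at this
    simp only [IsRoot.def, q, eval_finsetSum, eval_mul, eval_C, eval_pow, eval_X]
    rw [← this]
    exact Finset.sum_congr rfl fun i _ => mul_comm _ _
  simpa [q, finsetSum_coeff, coeff_C_mul_X_pow, Fin.val_inj] using congrArg (coeff · j) hq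

end PolyPath

lemma exists_le_mul_of_homogeneous {E : Type*} [NormedAddCommGroup E] [NormedSpace ℝ E]
    [FiniteDimensional ℝ E] {f g : E → ℝ} (hf : Continuous f) (hg : Continuous g)
    (hf_smul : ∀ t : ℝ, 0 ≤ t → ∀ x, f (t • x) = t * f x)
    (hg_smul : ∀ t : ℝ, 0 ≤ t → ∀ x, g (t • x) = t * g x)
    (hg_pos : ∀ x, x ≠ 0 → 0 < g x) :
    ∃ C > 0, ∀ x, f x ≤ C * g x := by
  have hg_ne : ∀ x ∈ Metric.sphere (0 : E) 1, g x ≠ 0 := fun x hx =>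
    (hg_pos x (ne_zero_of_mem_unit_sphere ⟨x, hx⟩)).ne'
  obtain ⟨C, hC⟩ := (isCompact_sphere (0 : E) 1).exists_bound_of_continuousOn
    (hf.continuousOn.div hg.continuousOn hg_ne)
  refine ⟨max C 1, by positivity, fun x => ?_⟩
  rcases eq_or_ne x 0 with rfl | hx
  · have hf0 : f 0 = 0 := by simpa using hf_smul 0 le_rfl 0
    have hg0 : g 0 = 0 := by simpa using hg_smul 0 le_rfl 0
    simp [hf0, hg0]
  set u := ‖x‖⁻¹ • x
  have hu : u ∈ Metric.sphere (0 : E) 1 := by simp [u, norm_smul, hx]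
  have hxu : x = ‖x‖ • u := by simp [u, smul_smul, hx]
  have hgu := hg_pos u (ne_zero_of_mem_unit_sphere ⟨u, hu⟩)
  have hfu : f u ≤ max C 1 * g u := by
    have := (le_abs_self _).trans (Real.norm_eq_abs _ ▸ hC u hu)
    rw [Pi.div_apply, div_le_iff₀ hgu] at this
    exact this.trans (mul_le_mul_of_nonneg_right (le_max_left _ _) hgu.le)
  rw [hxu, hf_smul _ (norm_nonneg _), hg_smul _ (norm_nonneg _), mul_left_comm]
  exact mul_le_mul_of_nonneg_left hfu (norm_nonneg _)

section PolyLpNorm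

variable {F : Type*} [NormedAddCommGroup F] [NormedSpace ℝ F] {k : ℕ} {r : ℝ}

noncomputable def polyLpNorm (r : ℝ) (c : Fin k → F) : ℝ :=
  (∫ α in (0 : ℝ)..1, ‖polyPath c α‖ ^ r) ^ (1 / r)

lemma continuous_polyLpNorm (hr : 0 < r) : Continuous (polyLpNorm (F := F) (k := k) r) := by
  have hint : Continuous fun c : Fin k → F => ∫ α in (0 : ℝ)..1, ‖polyPath c α‖ ^ r :=
    intervalIntegral.continuous_parametric_intervalIntegral_of_continuous'
      (continuous_polyPath_uncurry.norm.rpow_const fun _ => Or.inr hr.le) 0 1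
  exact hint.rpow_const fun _ => Or.inr (by positivity)

lemma integral_norm_polyPath_rpow_nonneg (c : Fin k → F) :
    0 ≤ ∫ α in (0 : ℝ)..1, ‖polyPath c α‖ ^ r :=
  intervalIntegral.integral_nonneg zero_le_one fun _ _ => by positivity

lemma polyLpNorm_smul (hr : 0 < r) {t : ℝ} (ht : 0 ≤ t) (c : Fin k → F) :
    polyLpNorm r (t • c) = t * polyLpNorm r c := by
  have hint : ∫ α in (0 : ℝ)..1, ‖polyPath (t • c) α‖ ^ r
      = t ^ r * ∫ α in (0 : ℝ)..1, ‖polyPath c α‖ ^ r := by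
    simp only [polyPath_smul, norm_smul, Real.norm_of_nonneg ht,
      Real.mul_rpow ht (norm_nonneg _), intervalIntegral.integral_const_mul]
  rw [polyLpNorm, hint, Real.mul_rpow (by positivity) (integral_norm_polyPath_rpow_nonneg c),
    ← Real.rpow_mul ht, mul_one_div_cancel hr.ne', Real.rpow_one, polyLpNorm]

lemma polyLpNorm_pos (hr : 0 < r) {c : Fin k → F} (hc : c ≠ 0) : 0 < polyLpNorm r c := by
  obtain ⟨α₀, hα₀, hne⟩ : ∃ α ∈ Icc (0 : ℝ) 1, polyPath c α ≠ 0 := by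
    by_contra! h
    exact hc (eq_zero_of_polyPath_eq_zero (Icc_infinite zero_lt_one) h)
  have hcont : Continuous fun α => ‖polyPath c α‖ ^ r :=
    (continuous_polyPath_uncurry.comp (Continuous.prodMk_right c)).norm.rpow_const
      fun _ => Or.inr hr.le
  refine Real.rpow_pos_of_pos (intervalIntegral.integral_pos zero_lt_one hcont.continuousOn
    (fun _ _ => by positivity) ⟨α₀, hα₀, by positivity⟩) _

lemma exists_polyLpNorm_le_mul [FiniteDimensional ℝ F] {q : ℝ} (hq : 0 < q) (hr : 0 < r) :
    ∃ C > 0, ∀ c : Fin k → F, polyLpNorm q c ≤ C * polyLpNorm r c :=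
  exists_le_mul_of_homogeneous (continuous_polyLpNorm hq) (continuous_polyLpNorm hr)
    (fun _ ht => polyLpNorm_smul hq ht) (fun _ ht => polyLpNorm_smul hr ht)
    (fun _ hc => polyLpNorm_pos hr hc)

lemma rpow_integral_norm_polyPath_rpow {t : ℝ} (ht : 0 < t) (c : Fin k → F) :
    (∫ τ in (0 : ℝ)..t, ‖polyPath c τ‖ ^ r) ^ (1 / r)
      = t ^ (1 / r) * polyLpNorm r (fun j => t ^ (j : ℕ) • c j) := by
  have hsub := intervalIntegral.smul_integral_comp_mul_left
    (fun τ => ‖polyPath c τ‖ ^ r) t (a := 0) (b := 1)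
  simp only [mul_zero, mul_one, polyPath_mul, smul_eq_mul] at hsub
  rw [← hsub, Real.mul_rpow ht.le (integral_norm_polyPath_rpow_nonneg _), polyLpNorm]

end PolyLpNorm

lemma NormedSpace.exp_eq_sum_range_of_pow_eq_zero {𝔸 : Type*} [Ring 𝔸] [Algebra ℝ 𝔸]
    [TopologicalSpace 𝔸] [IsTopologicalRing 𝔸] {a : 𝔸} {k : ℕ} (h : a ^ k = 0) :
    NormedSpace.exp a = ∑ j ∈ Finset.range k, (j.factorial : ℝ)⁻¹ • a ^ j := by
  rw [NormedSpace.exp_eq_tsum ℝ]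
  refine tsum_eq_sum fun j hj => ?_
  rw [pow_eq_zero_of_le (by simpa using hj) h, smul_zero]

lemma euclNorm_eq_norm {n : ℕ} (v : Fin n → ℝ) :
    euclNorm v = ‖WithLp.toLp 2 v‖ := by
  simp [euclNorm, EuclideanSpace.norm_eq]

lemma toLp_mulVec_exp_smul_mulVec {n k : ℕ} {A : Matrix (Fin n) (Fin n) ℝ} (hA : A ^ k = 0)
    (P : Matrix (Fin n) (Fin n) ℝ) (ξ : Fin n → ℝ) (τ : ℝ) :
    WithLp.toLp 2 (P *ᵥ (NormedSpace.exp (τ • A) *ᵥ ξ))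
      = polyPath (fun j : Fin k =>
          ((j : ℕ).factorial : ℝ)⁻¹ • WithLp.toLp 2 (P *ᵥ (A ^ (j : ℕ) *ᵥ ξ))) τ := by
  have hτA : (τ • A) ^ k = 0 := by rw [smul_pow, hA, smul_zero]
  rw [NormedSpace.exp_eq_sum_range_of_pow_eq_zero hτA, Matrix.sum_mulVec, Matrix.mulVec_sum,
    WithLp.toLp_sum, ← Fin.sum_univ_eq_sum_range, polyPath]
  refine Finset.sum_congr rfl fun j _ => ?_
  rw [smul_pow, smul_smul, Matrix.smul_mulVec, Matrix.mulVec_smul, WithLp.toLp_smul, mul_comm,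
    ← smul_smul]

theorem stmt_10_general {n : ℕ} (B Q : Matrix (Fin n) (Fin n) ℝ)
    (hQ : Q.PosSemidef) (hB : IsNilpotent B)
    (s : ℝ) (hs : 0 < s) :
    ∃ c > 0, ∀ t : ℝ, 0 < t → Mts B Q hQ s t ≤ c * t ^ ((1:ℝ)/2 - 1/(2*s)) := by
  obtain ⟨k, hk⟩ := hB
  have hBk : Bᵀ ^ k = 0 := by rw [← transpose_pow, hk, transpose_zero]
  obtain ⟨C, hC, hLp⟩ := exists_polyLpNorm_le_mul (F := EuclideanSpace ℝ (Fin n)) (k := k)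
    two_pos (by positivity : (0 : ℝ) < 2 * s)
  refine ⟨C, hC, fun t ht =>
    Real.iSup_le (fun ξ => ?_) (mul_nonneg hC.le (Real.rpow_nonneg ht.le _))⟩
  set c : Fin k → EuclideanSpace ℝ (Fin n) := fun j => t ^ (j : ℕ) •
    ((j : ℕ).factorial : ℝ)⁻¹ • WithLp.toLp 2 (hQ.sqrt *ᵥ (Bᵀ ^ (j : ℕ) *ᵥ (ξ : Fin n → ℝ)))
  have hL : ∀ r : ℝ, (∫ τ in (0 : ℝ)..t,
      euclNorm (hQ.sqrt *ᵥ (NormedSpace.exp (τ • Bᵀ) *ᵥ (ξ : Fin n → ℝ))) ^ r) ^ (1 / r)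
        = t ^ (1 / r) * polyLpNorm r c := fun r => by
    simp only [euclNorm_eq_norm, toLp_mulVec_exp_smul_mulVec hBk]
    exact rpow_integral_norm_polyPath_rpow ht _
  have hI : 0 ≤ ∫ τ in (0 : ℝ)..t,
      euclNorm (hQ.sqrt *ᵥ (NormedSpace.exp (τ • Bᵀ) *ᵥ (ξ : Fin n → ℝ))) ^ (2 * s) :=
    intervalIntegral.integral_nonneg ht.le fun _ _ => Real.rpow_nonneg (Real.sqrt_nonneg _) _
  rw [Real.rpow_neg hI, hL, hL, Real.rpow_sub ht, div_eq_mul_inv (t ^ _), mul_inv]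
  calc t ^ ((1 : ℝ) / 2) * polyLpNorm 2 c * ((t ^ (1 / (2 * s)))⁻¹ * (polyLpNorm (2 * s) c)⁻¹)
      = t ^ ((1 : ℝ) / 2) * (t ^ (1 / (2 * s)))⁻¹ * (polyLpNorm 2 c / polyLpNorm (2 * s) c) := by
        ring
    _ ≤ t ^ ((1 : ℝ) / 2) * (t ^ (1 / (2 * s)))⁻¹ * C := by
        gcongr
        -- `x / 0 = 0` covers the `ξ` whose trajectory vanishes identically.
        exact div_le_of_le_mul₀ (Real.rpow_nonneg (integral_norm_polyPath_rpow_nonneg c) _)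
          hC.le (hLp c)
    _ = C * (t ^ ((1 : ℝ) / 2) * (t ^ (1 / (2 * s)))⁻¹) := mul_comm _ _

/-- If `B` is nilpotent, then for every `s > 0` there is `c > 0` with
`M_t^s ≤ c t^{1/2 - 1/(2s)}` for all `t > 0`. -/
theorem stmt_10 {n : ℕ} (hn : 0 < n) (B Q : Matrix (Fin n) (Fin n) ℝ)
    (hQ : Q.PosSemidef) (hB : IsNilpotent B) (hK : KalmanKer B Q hQ)
    (s : ℝ) (hs : 0 < s) :
    ∃ c > 0, ∀ t : ℝ, 0 < t → Mts B Q hQ s t ≤ c * t ^ ((1:ℝ)/2 - 1/(2*s)) :=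
  stmt_10_general B Q hQ hB s hs
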